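/- arXiv:math/0604558 — 4 statements merged into one kernel-verified Lean document; each statement's English description precedes it below -/
import Mathlib

section
/- Let Γ be a democratic graph on r vertices, r an odd prime, in which every distance value occurs exactly twice at each vertex (n_a = 2 for all a) and all n = (r−1)/2 distance values are distinct. Then there is a symmetry σ of Γ generating a cyclic group of order r acting transitively on the vertices; consequently, after labeling v_i := σ^i(v_0), the distance matrix satisfies d(v_i, v_j) = d(v_0, v_{j−i mod r}). -/
/-- A democratic graph on an odd prime number `r` of vertices with `(r−1)/2`
distinct distance values, each attained exactly twice at every vertex, has a
symmetry of order `r` generating a cyclic group acting transitively on the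
vertices; hence `d(v_i, v_j) = d(v_0, v_{j−i})`. -/
theorem special_graphs_prime_democratic
    (V : Type*) [Fintype V] [DecidableEq V]
    (r : ℕ) (hr : Fintype.card V = r) (hprime : r.Prime) (hodd : Odd r)
    (dist : V → V → ℕ)
    (hsymm : ∀ v w, dist v w = dist w v)
    (hdiag : ∀ v, dist v v = 0)
    (hpos : ∀ v w, v ≠ w → 0 < dist v w)
    (hdem : ∀ v w : V, ∃ τ : Equiv.Perm V,
      (∀ x y, dist (τ x) (τ y) = dist x y) ∧ τ v = w)
    (D : Finset ℕ)
    (hD : D = Finset.image (fun q : V × V => dist q.1 q.2)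
      (Finset.univ.filter (fun q : V × V => q.1 ≠ q.2)))
    (hDcard : D.card = (r - 1) / 2)
    (htwo : ∀ v : V, ∀ a ∈ D,
      (Finset.univ.filter (fun w => w ≠ v ∧ dist v w = a)).card = 2) :
    ∃ σ : Equiv.Perm V,
      (∀ x y, dist (σ x) (σ y) = dist x y) ∧
      orderOf σ = r ∧
      (∀ v w : V, ∃ k : ℕ, (σ ^ k) v = w) ∧
      (∀ (v₀ : V) (i j : ℕ),
        dist ((σ ^ i) v₀) ((σ ^ j) v₀) = dist v₀ ((σ ^ j * (σ ^ i)⁻¹) v₀)) := by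
  classical
  -- the subgroup of symmetries
  let G : Subgroup (Equiv.Perm V) :=
    { carrier := {π | ∀ x y, dist (π x) (π y) = dist x y}
      mul_mem' := by
        intro a b ha hb x y
        simp only [Set.mem_setOf_eq] at *
        rw [Equiv.Perm.mul_apply, Equiv.Perm.mul_apply, ha, hb]
      one_mem' := by intro x y; rfl
      inv_mem' := by
        intro a ha x y
        simp only [Set.mem_setOf_eq] at *
        conv_rhs => rw [show x = a (a⁻¹ x) from (a.apply_symm_apply x).symm, show y = a (a⁻¹ y) from (a.apply_symm_apply y).symm, ha] }
  -- the action of G on V is transitive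
  haveI : MulAction.IsPretransitive G V := by
    constructor
    intro v w
    obtain ⟨τ, hτ, hτv⟩ := hdem v w
    exact ⟨⟨τ, hτ⟩, hτv⟩
  have hVne : Nonempty V := by
    rw [← Fintype.card_pos_iff, hr]; exact hprime.pos
  obtain ⟨v⟩ := hVne
  -- r divides the order of G
  have hdvd : r ∣ Fintype.card G := by
    have h1 := MulAction.index_stabilizer_of_transitive G v
    have h2 := (MulAction.stabilizer G v).index_dvd_card
    rw [h1, Nat.card_eq_fintype_card, hr] at h2
    rwa [Nat.card_eq_fintype_card] at h2
  -- Cauchy: an element of order r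
  haveI : Fact r.Prime := ⟨hprime⟩
  obtain ⟨g, hg⟩ := exists_prime_orderOf_dvd_card r hdvd
  refine ⟨(g : Equiv.Perm V), g.2, ?_, ?_, ?_⟩
  · rw [Subgroup.orderOf_coe, hg]
  · -- transitivity of powers of σ
    have hord : orderOf (g : Equiv.Perm V) = Fintype.card V := by
      rw [Subgroup.orderOf_coe, hg, hr]
    have hcyc : (g : Equiv.Perm V).IsCycle :=
      Equiv.Perm.isCycle_of_prime_order'' (by rwa [hr]) hord
    have hsupp : (g : Equiv.Perm V).support = Finset.univ := by
      apply Finset.eq_univ_of_card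
      rw [← hcyc.orderOf, hord]
    have hmoves : ∀ x : V, (g : Equiv.Perm V) x ≠ x := by
      intro x
      have := Finset.mem_univ x
      rw [← hsupp, Equiv.Perm.mem_support] at this
      exact this
    intro x y
    obtain ⟨i, hi⟩ := hcyc.exists_zpow_eq (hmoves x) (hmoves y)
    have hmem : ((g : Equiv.Perm V) ^ i) ∈ Submonoid.powers (g : Equiv.Perm V) :=
      mem_powers_iff_mem_zpowers.mpr ⟨i, rfl⟩
    obtain ⟨k, hk⟩ := hmem
    dsimp only at hk
    exact ⟨k, by rw [hk, hi]⟩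
  · -- the distance identity
    intro v₀ i j
    set σ := (g : Equiv.Perm V)
    have hpow : ∀ k : ℕ, (σ ^ k) ∈ G := fun k => pow_mem g.2 k
    have hinv : (σ ^ i)⁻¹ ∈ G := inv_mem (hpow i)
    have key : ∀ x y, dist ((σ ^ i)⁻¹ x) ((σ ^ i)⁻¹ y) = dist x y := hinv
    calc dist ((σ ^ i) v₀) ((σ ^ j) v₀)
        = dist ((σ ^ i)⁻¹ ((σ ^ i) v₀)) ((σ ^ i)⁻¹ ((σ ^ j) v₀)) := (key _ _).symm
      _ = dist v₀ ((σ ^ j * (σ ^ i)⁻¹) v₀) := by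
          rw [show ∀ z, (σ ^ i)⁻¹ ((σ ^ i) z) = z from fun z => (σ ^ i).symm_apply_apply z]
          congr 1
          rw [Equiv.Perm.mul_apply]
          have hcomm : (σ ^ i)⁻¹ * σ ^ j = σ ^ j * (σ ^ i)⁻¹ :=
            Commute.eq ((Commute.pow_pow_self σ i j).inv_left.symm).symm
          rw [← Equiv.Perm.mul_apply, hcomm, Equiv.Perm.mul_apply]
end

section
/- Suppose a graph Γ on r vertices is democratic and all pairwise distances between distinct vertices are distinct distance values with each value attained exactly twice per vertex. If the edges of a fixed distance value d_a are partitioned into connected closed curves (cycles), then democracy forces all cycles of a given distance value d_a to have equal length L_a, where L_a divides r and 3 ≤ L_a ≤ r. -/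
/-- In a democratic graph where every distance value is attained exactly twice
at each vertex, the edges of a fixed distance value `d_a` form disjoint cycles
all of the same pathlength `L_a`, where `L_a` divides `r` and `3 ≤ L_a ≤ r`. -/
theorem special_graphs_cycles_equal_length
    (V : Type*) [Fintype V] [DecidableEq V]
    (dist : V → V → ℕ)
    (hsymm : ∀ v w, dist v w = dist w v)
    (hdiag : ∀ v, dist v v = 0)
    (hpos : ∀ v w, v ≠ w → 0 < dist v w)
    (hdem : ∀ v w : V, ∃ τ : Equiv.Perm V,
      (∀ x y, dist (τ x) (τ y) = dist x y) ∧ τ v = w)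
    (D : Finset ℕ)
    (hD : D = Finset.image (fun q : V × V => dist q.1 q.2)
      (Finset.univ.filter (fun q : V × V => q.1 ≠ q.2)))
    (htwo : ∀ v : V, ∀ a ∈ D,
      (Finset.univ.filter (fun w => w ≠ v ∧ dist v w = a)).card = 2) :
    ∀ a ∈ D, ∃ L : ℕ, 3 ≤ L ∧ L ≤ Fintype.card V ∧ L ∣ Fintype.card V ∧
      ∀ c : (SimpleGraph.fromRel (fun v w => dist v w = a)).ConnectedComponent,
        Nat.card c.supp = L := by
  classical
  intro a ha
  set G := SimpleGraph.fromRel (fun v w => dist v w = a) with hG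
  -- obtain a vertex
  have ha' := ha
  rw [hD, Finset.mem_image] at ha'
  obtain ⟨q, hq, hqa⟩ := ha'
  rw [Finset.mem_filter] at hq
  have v₀ : V := q.1
  -- adjacency characterization
  have hAdj : ∀ x y, G.Adj x y ↔ x ≠ y ∧ dist x y = a := by
    intro x y
    rw [hG, SimpleGraph.fromRel_adj]
    constructor
    · rintro ⟨hne, h | h⟩
      · exact ⟨hne, h⟩
      · exact ⟨hne, (hsymm x y).trans h⟩
    · rintro ⟨hne, h⟩
      exact ⟨hne, Or.inl h⟩
  -- all components have the same cardinality
  have hcard : ∀ v w : V,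
      Nat.card (G.connectedComponentMk v).supp
        = Nat.card (G.connectedComponentMk w).supp := by
    intro v w
    obtain ⟨τ, hτ, hτv⟩ := hdem v w
    let φ : G ≃g G := ⟨τ, by
      intro x y
      simp only [hAdj, hτ, ne_eq, EmbeddingLike.apply_eq_iff_eq]⟩
    have e := SimpleGraph.ConnectedComponent.isoEquivSupp φ (G.connectedComponentMk v)
    have hmap : φ.connectedComponentEquiv (G.connectedComponentMk v)
        = G.connectedComponentMk w := by
      rw [← hτv]
      rfl
    rw [hmap] at e
    exact Nat.card_congr e
  refine ⟨Nat.card (G.connectedComponentMk v₀).supp, ?_, ?_, ?_, ?_⟩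
  · -- 3 ≤ L
    have h2 := htwo v₀ a ha
    obtain ⟨x, y, hxy, hset⟩ := Finset.card_eq_two.mp h2
    have hx : x ≠ v₀ ∧ dist v₀ x = a := by
      have : x ∈ Finset.univ.filter (fun w => w ≠ v₀ ∧ dist v₀ w = a) := by
        rw [hset]; simp
      simpa using this
    have hy : y ≠ v₀ ∧ dist v₀ y = a := by
      have : y ∈ Finset.univ.filter (fun w => w ≠ v₀ ∧ dist v₀ w = a) := by
        rw [hset]; simp
      simpa using this
    have hxm : x ∈ (G.connectedComponentMk v₀).supp := by
      rw [SimpleGraph.ConnectedComponent.mem_supp_iff, SimpleGraph.ConnectedComponent.eq]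
      exact ((hAdj x v₀).mpr ⟨hx.1, (hsymm x v₀).trans hx.2⟩).reachable
    have hym : y ∈ (G.connectedComponentMk v₀).supp := by
      rw [SimpleGraph.ConnectedComponent.mem_supp_iff, SimpleGraph.ConnectedComponent.eq]
      exact ((hAdj y v₀).mpr ⟨hy.1, (hsymm y v₀).trans hy.2⟩).reachable
    have hvm : v₀ ∈ (G.connectedComponentMk v₀).supp :=
      SimpleGraph.ConnectedComponent.connectedComponentMk_mem
    have hsub : ({v₀, x, y} : Set V) ⊆ (G.connectedComponentMk v₀).supp := by
      intro z hz
      rcases hz with rfl | rfl | rfl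
      · exact hvm
      · exact hxm
      · exact hym
    have h3 : ({v₀, x, y} : Set V).ncard = 3 := by
      rw [Set.ncard_insert_of_notMem (by simp [Ne.symm hx.1, Ne.symm hy.1]),
        Set.ncard_pair hxy]
    calc 3 = ({v₀, x, y} : Set V).ncard := h3.symm
      _ ≤ ((G.connectedComponentMk v₀).supp).ncard :=
          Set.ncard_le_ncard hsub (Set.toFinite _)
      _ = Nat.card (G.connectedComponentMk v₀).supp := rfl
  · -- L ≤ card V
    calc Nat.card (G.connectedComponentMk v₀).supp
        = ((G.connectedComponentMk v₀).supp).ncard := rfl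
      _ ≤ (Set.univ : Set V).ncard :=
          Set.ncard_le_ncard (Set.subset_univ _) (Set.toFinite _)
      _ = Fintype.card V := by rw [Set.ncard_univ, Nat.card_eq_fintype_card]
  · -- divisibility
    haveI : Fintype G.ConnectedComponent := Fintype.ofFinite _
    have hsum : Fintype.card V = ∑ c : G.ConnectedComponent, Nat.card c.supp := by
      have e := Equiv.sigmaFiberEquiv G.connectedComponentMk
      have : Fintype.card V = Fintype.card (Σ c : G.ConnectedComponent,
          {v // G.connectedComponentMk v = c}) := (Fintype.card_congr e).symm
      rw [this, Fintype.card_sigma]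
      congr 1
      ext c
      rw [Nat.card_eq_fintype_card]
      apply Fintype.card_congr
      exact Equiv.subtypeEquivRight (fun v => Iff.rfl)
    rw [hsum]
    have : ∀ c : G.ConnectedComponent,
        Nat.card c.supp = Nat.card (G.connectedComponentMk v₀).supp := by
      intro c
      induction c using SimpleGraph.ConnectedComponent.ind with
      | _ v => exact hcard v v₀
    rw [Finset.sum_congr rfl (fun c _ => this c), Finset.sum_const, smul_eq_mul]
    exact dvd_mul_left _ _
  · intro c
    induction c using SimpleGraph.ConnectedComponent.ind with
    | _ v => exact hcard v v₀
end

section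
/- Let r = 2n be even, and define distances among r vertices by d(v_i, v_j) = d_{(j+i−2) mod (r−1)} for 1 ≤ i < j ≤ r−1, and d(v_i, v_r) = d_{(2i−2) mod (r−1)} for 1 ≤ i ≤ r−1, where d_0 := d_{r−1} and d_1,…,d_{r−1} are given positive values. Then this graph is predemocratic: every vertex has the same multiset of distances {d_1, …, d_{r−1}} to the other r−1 vertices. -/
/-- For `r = 2n` even, the graph on vertices `v_1, …, v_r` with
`d(v_i, v_j) = d_{(j+i−2) mod (r−1)}` for `1 ≤ i < j ≤ r−1` and
`d(v_i, v_r) = d_{(2i−2) mod (r−1)}` (with `d_0 ≡ d_{r−1}`) is predemocratic: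
every vertex has the multiset of distances `{d_1, …, d_{r−1}}` to the other
vertices. -/
theorem special_graphs_even_predemocratic (n : ℕ) (hn : 1 ≤ n) (r : ℕ)
    (hr : r = 2 * n)
    (dval : ℕ → ℕ) (hdpos : ∀ a, 1 ≤ a → a ≤ r - 1 → 0 < dval a)
    (hd0 : dval 0 = dval (r - 1))
    (dist : ℕ → ℕ → ℕ)
    (hsymm : ∀ i j, dist i j = dist j i)
    (h1 : ∀ i j, 1 ≤ i → i < j → j ≤ r - 1 →
      dist i j = dval ((j + i - 2) % (r - 1)))
    (h2 : ∀ i, 1 ≤ i → i ≤ r - 1 → dist i r = dval ((2 * i - 2) % (r - 1))) :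
    ∀ i ∈ Finset.Icc 1 r,
      ((Finset.Icc 1 r).erase i).val.map (dist i) =
        (Finset.Icc 1 (r - 1)).val.map dval := by
  intro i hi
  rw [Finset.mem_Icc] at hi
  have hr2 : 2 ≤ r := by omega
  have hm1 : 1 ≤ r - 1 := by omega
  set S := (Finset.Icc 1 r).erase i with hS
  have hmemS : ∀ j, j ∈ S ↔ (1 ≤ j ∧ j ≤ r ∧ j ≠ i) := by
    intro j
    simp only [hS, Finset.mem_erase, Finset.mem_Icc]
    tauto
  set f : ℕ → ℕ := fun j =>
    if j = r then (2 * i - 2) % (r - 1)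
    else if i = r then (2 * j - 2) % (r - 1)
    else (i + j - 2) % (r - 1) with hf
  -- key arithmetic lemma
  have key : ∀ c a b : ℕ, 1 ≤ c → 1 ≤ a → a ≤ r - 1 → 1 ≤ b → b ≤ r - 1 →
      (c + a - 2) % (r - 1) = (c + b - 2) % (r - 1) → a = b := by
    intro c a b hc ha1 ha2 hb1 hb2 h
    rcases le_total a b with hab | hab
    · have hle : c + a - 2 ≤ c + b - 2 := by omega
      have hd := (Nat.modEq_iff_dvd' hle).mp h
      have he : c + b - 2 - (c + a - 2) = b - a := by omega
      rw [he] at hd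
      have := Nat.eq_zero_of_dvd_of_lt hd (by omega)
      omega
    · have hle : c + b - 2 ≤ c + a - 2 := by omega
      have hd := (Nat.modEq_iff_dvd' hle).mp h.symm
      have he : c + a - 2 - (c + b - 2) = a - b := by omega
      rw [he] at hd
      have := Nat.eq_zero_of_dvd_of_lt hd (by omega)
      omega
  have hcop : Nat.Coprime (r - 1) 2 := by
    have hodd : Odd (r - 1) := ⟨n - 1, by omega⟩
    exact Nat.coprime_two_right.mpr hodd
  have key2 : ∀ a b : ℕ, 1 ≤ a → a ≤ r - 1 → 1 ≤ b → b ≤ r - 1 →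
      (2 * a - 2) % (r - 1) = (2 * b - 2) % (r - 1) → a = b := by
    intro a b ha1 ha2 hb1 hb2 h
    rcases le_total a b with hab | hab
    · have hle : 2 * a - 2 ≤ 2 * b - 2 := by omega
      have hd := (Nat.modEq_iff_dvd' hle).mp h
      have he : 2 * b - 2 - (2 * a - 2) = (b - a) * 2 := by omega
      rw [he] at hd
      have hd2 := hcop.dvd_of_dvd_mul_right hd
      have := Nat.eq_zero_of_dvd_of_lt hd2 (by omega)
      omega
    · have hle : 2 * b - 2 ≤ 2 * a - 2 := by omega
      have hd := (Nat.modEq_iff_dvd' hle).mp h.symm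
      have he : 2 * a - 2 - (2 * b - 2) = (a - b) * 2 := by omega
      rw [he] at hd
      have hd2 := hcop.dvd_of_dvd_mul_right hd
      have := Nat.eq_zero_of_dvd_of_lt hd2 (by omega)
      omega
  have hinj : Set.InjOn f ↑S := by
    intro a ha b hb hfab
    rw [Finset.mem_coe, hmemS] at ha hb
    obtain ⟨ha1, ha2, hai⟩ := ha
    obtain ⟨hb1, hb2, hbi⟩ := hb
    by_cases har : a = r <;> by_cases hbr : b = r
    · omega
    · exfalso
      have hir : i ≠ r := by omega
      simp only [hf, har, if_pos, if_neg hbr, if_neg hir] at hfab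
      have : i = b := key i i b (by omega) (by omega) (by omega) hb1 (by omega)
        (by rw [← hfab]; congr 2; omega)
      omega
    · exfalso
      have hir : i ≠ r := by omega
      simp only [hf, hbr, if_pos, if_neg har, if_neg hir] at hfab
      have : a = i := key i a i (by omega) ha1 (by omega) (by omega) (by omega)
        (by rw [hfab]; congr 2; omega)
      omega
    · by_cases hir : i = r
      · exact key2 a b ha1 (by omega) hb1 (by omega)
          (by simpa only [hf, if_neg har, if_neg hbr, if_pos hir] using hfab)
      · exact key i a b (by omega) ha1 (by omega) hb1 (by omega)
          (by simpa only [hf, if_neg har, if_neg hbr, if_neg hir] using hfab)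
  have hsub : S.image f ⊆ Finset.range (r - 1) := by
    intro x hx
    rw [Finset.mem_image] at hx
    obtain ⟨j, hj, rfl⟩ := hx
    rw [Finset.mem_range]
    simp only [hf]
    split_ifs <;> exact Nat.mod_lt _ (by omega)
  have hcardS : S.card = r - 1 := by
    rw [hS, Finset.card_erase_of_mem (Finset.mem_Icc.mpr ⟨hi.1, hi.2⟩),
      Nat.card_Icc]
    omega
  have himg : S.image f = Finset.range (r - 1) :=
    Finset.eq_of_subset_of_card_le hsub
      (by rw [Finset.card_range, Finset.card_image_of_injOn hinj, hcardS])
  have hpt : ∀ j ∈ S.val, dist i j = (dval ∘ f) j := by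
    intro j hj
    rw [Finset.mem_val, hmemS] at hj
    obtain ⟨hj1, hj2, hji⟩ := hj
    simp only [Function.comp, hf]
    by_cases hjr : j = r
    · have hir : i ≠ r := by omega
      rw [if_pos hjr, hjr]
      exact h2 i hi.1 (by omega)
    · rw [if_neg hjr]
      by_cases hir : i = r
      · rw [if_pos hir, hsymm, hir]
        exact h2 j hj1 (by omega)
      · rw [if_neg hir]
        rcases lt_trichotomy i j with h | h | h
        · rw [h1 i j hi.1 h (by omega), Nat.add_comm j i]
        · omega
        · rw [hsymm, h1 j i hj1 h (by omega)]
  calc S.val.map (dist i)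
      = S.val.map (dval ∘ f) := Multiset.map_congr rfl hpt
    _ = (S.val.map f).map dval := (Multiset.map_map dval f S.val).symm
    _ = (S.image f).val.map dval := by rw [Finset.image_val_of_injOn hinj]
    _ = (Finset.range (r - 1)).val.map dval := by rw [himg]
    _ = (Finset.Icc 1 (r - 1)).val.map dval := by
        have e0 : Finset.range (r - 1) = insert 0 (Finset.Icc 1 (r - 2)) := by
          ext x
          simp only [Finset.mem_range, Finset.mem_insert, Finset.mem_Icc]
          omega
        have e1 : Finset.Icc 1 (r - 1) = insert (r - 1) (Finset.Icc 1 (r - 2)) := by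
          ext x
          simp only [Finset.mem_insert, Finset.mem_Icc]
          omega
        have n0 : (0 : ℕ) ∉ Finset.Icc 1 (r - 2) := by simp
        have n1 : r - 1 ∉ Finset.Icc 1 (r - 2) := by
          simp only [Finset.mem_Icc]; omega
        rw [e0, e1, Finset.insert_val_of_notMem n0, Finset.insert_val_of_notMem n1,
          Multiset.map_cons, Multiset.map_cons, hd0]
end

section
/- If σ is a symmetry of a realisation (i.e., a permutation of the vertex set V such that the induced graph function satisfies f(σS) = f(S) for every subset S ⊆ V), then σ preserves all pairwise distances: δ(s_{σv}, s_{σw}) = δ(s_v, s_w) for all vertices v, w. -/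
/-- If `σ` is a permutation of the vertices of a realisation with
`f(σS) = f(S)` for all subsets `S ⊆ V`, then `σ` preserves all pairwise
distances `δ(s_v, s_w) = p − #(s_v ∩ s_w)`. -/
theorem special_graphs_symmetry_preserves_distance
    (V : Type*) [Fintype V] [DecidableEq V] (d p : ℕ)
    (s : V → Finset (Fin d)) (hcard : ∀ v, (s v).card = p)
    (f : Finset V → ℕ)
    (hf : ∀ S : Finset V, f S =
      (Finset.univ.filter (fun i : Fin d =>
        (∀ v ∈ S, i ∈ s v) ∧ ∀ v ∉ S, i ∉ s v)).card)
    (σ : Equiv.Perm V)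
    (hσ : ∀ S : Finset V, f (Finset.image σ S) = f S) :
    ∀ v w : V, p - (s (σ v) ∩ s (σ w)).card = p - (s v ∩ s w).card := by
  -- Key: #(s v ∩ s w) = ∑_{S ∋ v,w} f S
  have key : ∀ v w : V, (s v ∩ s w).card =
      ∑ S ∈ Finset.univ.filter (fun S : Finset V => v ∈ S ∧ w ∈ S), f S := by
    intro v w
    have h1 : ∀ S : Finset V, f S =
        ∑ i : Fin d, if ((∀ u ∈ S, i ∈ s u) ∧ ∀ u ∉ S, i ∉ s u) then 1 else 0 := by
      intro S
      rw [hf S, Finset.card_filter]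
    simp only [h1]
    rw [Finset.sum_comm]
    have h2 : ∀ i : Fin d,
        (∑ S ∈ Finset.univ.filter (fun S : Finset V => v ∈ S ∧ w ∈ S),
          if ((∀ u ∈ S, i ∈ s u) ∧ ∀ u ∉ S, i ∉ s u) then 1 else 0) =
        if i ∈ s v ∩ s w then 1 else 0 := by
      intro i
      set T : Finset V := Finset.univ.filter (fun u => i ∈ s u) with hT
      have hPT : ∀ S : Finset V,
          ((∀ u ∈ S, i ∈ s u) ∧ ∀ u ∉ S, i ∉ s u) ↔ S = T := by
        intro S
        constructor
        · rintro ⟨h₁, h₂⟩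
          ext u
          simp only [hT, Finset.mem_filter, Finset.mem_univ, true_and]
          constructor
          · exact fun hu => h₁ u hu
          · intro hu
            by_contra hnu
            exact h₂ u hnu hu
        · rintro rfl
          constructor
          · intro u hu
            simpa [hT] using hu
          · intro u hu
            simpa [hT] using hu
      simp only [hPT]
      rw [Finset.sum_ite_eq' (Finset.univ.filter (fun S : Finset V => v ∈ S ∧ w ∈ S)) T (fun _ => 1)]
      simp [hT]
    rw [Finset.sum_congr rfl (fun i _ => h2 i)]
    have h3 : Finset.filter (fun x : Fin d => x ∈ s v ∩ s w) Finset.univ = s v ∩ s w := by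
      ext x; simp
    rw [← h3, Finset.card_filter]
    simp
  intro v w
  congr 1
  rw [key v w, key (σ v) (σ w)]
  have himg : Finset.univ.filter (fun S : Finset V => σ v ∈ S ∧ σ w ∈ S) =
      (Finset.univ.filter (fun S : Finset V => v ∈ S ∧ w ∈ S)).image
        (Finset.image σ) := by
    ext S
    simp only [Finset.mem_filter, Finset.mem_univ, true_and, Finset.mem_image]
    constructor
    · rintro ⟨hv, hw⟩
      refine ⟨S.image σ.symm, ⟨?_, ?_⟩, ?_⟩
      · simpa using Finset.mem_image_of_mem σ.symm hv
      · simpa using Finset.mem_image_of_mem σ.symm hw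
      · rw [Finset.image_image]
        simp
    · rintro ⟨S', ⟨hv, hw⟩, rfl⟩
      exact ⟨Finset.mem_image_of_mem σ hv, Finset.mem_image_of_mem σ hw⟩
  rw [himg, Finset.sum_image (fun a _ b _ h => Finset.image_injective σ.injective h)]
  exact Finset.sum_congr rfl (fun S _ => hσ S)
end
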